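/- Let n ≥ 4, p ≥ 1, θ0 = (1/√n,…,1/√n), and let X be a random vector uniformly distributed on P_{θ0^⊥}B_p^n. Define f(η1,η2) = E[⟨X,η1⟩²⟨X,η2⟩²] − E[⟨X,η1⟩²]·E[⟨X,η2⟩²], and set ξ1 = (e1−e2+e3−e4)/2, ξ2 = (e1−e2−e3+e4)/2, ξ̄1 = (e1−e2)/√2, ξ̄2 = (e3−e4)/√2 ∈ S^{n−1} ∩ θ0^⊥. Then for every pair of orthonormal vectors η1, η2 ∈ S^{n−1} ∩ θ0^⊥, f(η1,η2) = f(ξ̄1,ξ̄2) + 4·(f(ξ1,ξ2) − f(ξ̄1,ξ̄2)) · Σ_{i=1}^n η1(i)² η2(i)². -/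

import Mathlib

open MeasureTheory Real
open scoped RealInnerProductSpace ENNReal

noncomputable section

/-- `ℝⁿ` with the Euclidean structure. -/
abbrev E (n : ℕ) := EuclideanSpace ℝ (Fin n)

/-- The unit ball of the `ℓ_p` norm on `ℝⁿ`. -/
def lpBall (n : ℕ) (p : ℝ) : Set (E n) := {x | ∑ i, |x i| ^ p ≤ 1}

/-- `f(η₁,η₂) = E⟨X,η₁⟩²⟨X,η₂⟩² - E⟨X,η₁⟩² E⟨X,η₂⟩²` for `X` distributed according to `μ`. -/
def covf {n : ℕ} (μ : Measure (E n)) (a b : E n) : ℝ :=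
  (∫ x, ⟪x, a⟫ ^ 2 * ⟪x, b⟫ ^ 2 ∂μ) - (∫ x, ⟪x, a⟫ ^ 2 ∂μ) * (∫ x, ⟪x, b⟫ ^ 2 ∂μ)

/-- The canonical basis vectors of `ℝⁿ`. -/
def stdb {n : ℕ} (i : Fin n) : E n := EuclideanSpace.single i 1

/-- The diagonal unit vector `θ₀ = (1/√n, …, 1/√n)`. -/
def theta0 (n : ℕ) : E n := (WithLp.equiv 2 (Fin n → ℝ)).symm (fun _ => (Real.sqrt n)⁻¹)

/-- The orthogonal projection onto the hyperplane `θ⊥` (for a unit vector `θ`). -/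
def projPerp {n : ℕ} (θ : E n) (x : E n) : E n := x - ⟪x, θ⟫ • θ

/-- The uniform probability measure on a set `K ⊆ ℝⁿ`, given by the normalized `d`-dimensional
Hausdorff measure. -/
def unifH {n : ℕ} (d : ℝ) (K : Set (E n)) : Measure (E n) :=
  (μH[d] K)⁻¹ • (μH[d]).restrict K

/-- The uniform probability measure on the hyperplane projection `P_{θ₀⊥} B_p^n`, given by the
normalized `(n-1)`-dimensional Hausdorff measure. -/
def unifProj (n : ℕ) (p : ℝ) : Measure (E n) :=
  unifH ((n : ℝ) - 1) (projPerp (theta0 n) '' lpBall n p)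


/-!
The law of `X` is invariant under permutations of the coordinates, because such a permutation is
an isometry fixing `θ₀` and preserving `B_p^n`. Hence the moment tensors `E[X_i X_j]` and
`E[X_i X_j X_k X_l]` depend only on the pattern of equalities among the indices, i.e. they are
linear combinations of products of Kronecker deltas. Contracting them against vectors with
coordinate sum zero kills every delta pattern that leaves an index free, so that for orthonormal
`η₁, η₂ ⊥ θ₀` only `f(η₁, η₂) = Λ + κ ∑ η₁(i)² η₂(i)²` survives. The vectors `ξ̄₁, ξ̄₂` have
disjoint supports while `∑ ξ₁(i)² ξ₂(i)² = 1/4`, which determines `Λ` and `κ`.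
-/

open Finset Function

local notation "δ" i:max j:max => (if i = j then (1 : ℝ) else 0)

section DeltaTensors

variable {ι : Type*}

structure IsSymmetric4 (M : ι → ι → ι → ι → ℝ) : Prop where
  swap₁₂ : ∀ i j k l, M i j k l = M j i k l
  swap₂₃ : ∀ i j k l, M i j k l = M i k j l
  swap₃₄ : ∀ i j k l, M i j k l = M i j l k

theorem IsSymmetric4.ext {M N : ι → ι → ι → ι → ℝ} (hM : IsSymmetric4 M) (hN : IsSymmetric4 N)
    (hdiag : ∀ i k l, M i i k l = N i i k l)
    (hdistinct : ∀ i j k l, i ≠ j → i ≠ k → i ≠ l → j ≠ k → j ≠ l → k ≠ l →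
      M i j k l = N i j k l) :
    M = N := by
  funext i j k l
  rcases eq_or_ne i j with rfl | hij
  · exact hdiag i k l
  rcases eq_or_ne i k with rfl | hik
  · rw [hM.swap₂₃, hN.swap₂₃, hdiag]
  rcases eq_or_ne i l with rfl | hil
  · rw [hM.swap₃₄, hM.swap₂₃, hN.swap₃₄, hN.swap₂₃, hdiag]
  rcases eq_or_ne j k with rfl | hjk
  · rw [hM.swap₁₂, hM.swap₂₃, hN.swap₁₂, hN.swap₂₃, hdiag]
  rcases eq_or_ne j l with rfl | hjl
  · rw [hM.swap₃₄, hM.swap₁₂, hM.swap₂₃, hN.swap₃₄, hN.swap₁₂, hN.swap₂₃, hdiag]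
  rcases eq_or_ne k l with rfl | hkl
  · rw [hM.swap₂₃, hM.swap₁₂, hM.swap₃₄, hM.swap₂₃, hN.swap₂₃, hN.swap₁₂, hN.swap₃₄, hN.swap₂₃,
      hdiag]
  exact hdistinct i j k l hij hik hil hjk hjl hkl

theorem apply_comp_eq_of_perm_invariant {M : ι → ι → ι → ι → ℝ}
    (hperm : ∀ (σ : Equiv.Perm ι) i j k l, M (σ i) (σ j) (σ k) (σ l) = M i j k l)
    {m : ℕ} {f g : Fin m → ι} (hf : Injective f) (hg : Injective g) (w : Fin 4 → Fin m) :
    M (f (w 0)) (f (w 1)) (f (w 2)) (f (w 3)) = M (g (w 0)) (g (w 1)) (g (w 2)) (g (w 3)) := by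
  obtain ⟨σ, hσ⟩ := Equiv.Perm.exists_extending_pair f g hf hg
  simp only [← hσ, hperm]

variable [DecidableEq ι]

/-- The `c₂` term runs over the three pairings of the indices `i, j, k, l`, the `c₃` term over
their four triples. -/
def deltaQuartic (c₀ c₁ c₂ c₃ c₄ : ℝ) (i j k l : ι) : ℝ :=
  c₀ + c₁ * (δ i j + δ i k + δ i l + δ j k + δ j l + δ k l)
    + c₂ * (δ i j * δ k l + δ i k * δ j l + δ i l * δ j k)
    + c₃ * (δ i j * δ i k + δ i j * δ i l + δ i k * δ i l + δ j k * δ j l)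
    + c₄ * (δ i j * δ i k * δ i l)

theorem isSymmetric4_deltaQuartic (c₀ c₁ c₂ c₃ c₄ : ℝ) :
    IsSymmetric4 (deltaQuartic (ι := ι) c₀ c₁ c₂ c₃ c₄) where
  swap₁₂ i j k l := by
    unfold deltaQuartic
    by_cases hij : i = j
    · subst hij; rfl
    · simp only [hij, Ne.symm hij, if_false]
      split_ifs <;> simp_all
  swap₂₃ i j k l := by
    unfold deltaQuartic
    by_cases hjk : j = k
    · subst hjk; rfl
    · simp only [hjk, Ne.symm hjk, if_false]
      split_ifs <;> simp_all
  swap₃₄ i j k l := by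
    unfold deltaQuartic
    by_cases hkl : k = l
    · subst hkl; rfl
    · simp only [hkl, Ne.symm hkl, if_false]
      split_ifs <;> simp_all

/-- The coefficients are obtained by Möbius inversion from the values `m₄, m₃₁, m₂₂, m₂₁₁, m₁₁₁₁`
of `M` on the five orbits of index patterns. -/
theorem IsSymmetric4.eq_deltaQuartic {M : ι → ι → ι → ι → ℝ} (hM : IsSymmetric4 M)
    {m₄ m₃₁ m₂₂ m₂₁₁ m₁₁₁₁ : ℝ} (h₄ : ∀ i, M i i i i = m₄)
    (h₃₁ : ∀ i j, i ≠ j → M i i i j = m₃₁) (h₂₂ : ∀ i j, i ≠ j → M i i j j = m₂₂)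
    (h₂₁₁ : ∀ i j k, i ≠ j → i ≠ k → j ≠ k → M i i j k = m₂₁₁)
    (h₁₁₁₁ : ∀ i j k l, i ≠ j → i ≠ k → i ≠ l → j ≠ k → j ≠ l → k ≠ l → M i j k l = m₁₁₁₁) :
    M = deltaQuartic m₁₁₁₁ (m₂₁₁ - m₁₁₁₁) (m₂₂ - 2 * m₂₁₁ + m₁₁₁₁) (m₃₁ - 3 * m₂₁₁ + 2 * m₁₁₁₁)
      (m₄ - 4 * m₃₁ - 3 * m₂₂ + 12 * m₂₁₁ - 6 * m₁₁₁₁) := by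
  refine hM.ext (isSymmetric4_deltaQuartic _ _ _ _ _) (fun i k l => ?_)
    fun i j k l hij hik hil hjk hjl hkl => ?_
  · rcases eq_or_ne i k with rfl | hik
    · rcases eq_or_ne i l with rfl | hil
      · simp only [h₄, deltaQuartic, ↓reduceIte, mul_one]; ring
      · simp only [h₃₁ i l hil, deltaQuartic, ↓reduceIte, hil]; ring
    rcases eq_or_ne i l with rfl | hil
    · rw [hM.swap₃₄]
      simp only [h₃₁ i k hik, deltaQuartic, ↓reduceIte, hik, hik.symm]; ring
    rcases eq_or_ne k l with rfl | hkl
    · simp only [h₂₂ i k hik, deltaQuartic, ↓reduceIte, hik]; ring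
    · simp [deltaQuartic, h₂₁₁ i k l hik hil hkl, hik, hil, hkl]
  · simp [deltaQuartic, h₁₁₁₁ i j k l hij hik hil hjk hjl hkl, *]

variable [Fintype ι]

theorem exists_eq_deltaQuartic_of_perm_invariant {M : ι → ι → ι → ι → ℝ} (hM : IsSymmetric4 M)
    (hperm : ∀ (σ : Equiv.Perm ι) i j k l, M (σ i) (σ j) (σ k) (σ l) = M i j k l)
    (hι : 4 ≤ Fintype.card ι) :
    ∃ c₀ c₁ c₂ c₃ c₄ : ℝ, M = deltaQuartic c₀ c₁ c₂ c₃ c₄ := by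
  obtain ⟨v⟩ := Function.Embedding.nonempty_of_card_le (α := Fin 4) (by simpa using hι)
  have hv : Injective v := v.injective
  refine ⟨_, _, _, _, _, hM.eq_deltaQuartic (m₄ := M (v 0) (v 0) (v 0) (v 0))
    (m₃₁ := M (v 0) (v 0) (v 0) (v 1)) (m₂₂ := M (v 0) (v 0) (v 1) (v 1))
    (m₂₁₁ := M (v 0) (v 0) (v 1) (v 2)) (m₁₁₁₁ := M (v 0) (v 1) (v 2) (v 3))
    (fun i => ?_) (fun i j hij => ?_) (fun i j hij => ?_) (fun i j k hij hik hjk => ?_)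
    (fun i j k l hij hik hil hjk hjl hkl => ?_)⟩
  · simpa using (hperm (Equiv.swap i (v 0)) i i i i).symm
  · simpa using apply_comp_eq_of_perm_invariant hperm (f := ![i, j]) (g := ![v 0, v 1])
      (by simp [Injective, Fin.forall_fin_succ, hij, hij.symm])
      (by simp [Injective, Fin.forall_fin_succ, hv.eq_iff]) ![0, 0, 0, 1]
  · simpa using apply_comp_eq_of_perm_invariant hperm (f := ![i, j]) (g := ![v 0, v 1])
      (by simp [Injective, Fin.forall_fin_succ, hij, hij.symm])
      (by simp [Injective, Fin.forall_fin_succ, hv.eq_iff]) ![0, 0, 1, 1]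
  · simpa using apply_comp_eq_of_perm_invariant hperm (f := ![i, j, k]) (g := ![v 0, v 1, v 2])
      (by simp [Injective, Fin.forall_fin_succ, *, hij.symm, hik.symm, hjk.symm])
      (by simp [Injective, Fin.forall_fin_succ, hv.eq_iff]) ![0, 0, 1, 2]
  · simpa using apply_comp_eq_of_perm_invariant hperm (f := ![i, j, k, l])
      (g := ![v 0, v 1, v 2, v 3])
      (by simp [Injective, Fin.forall_fin_succ, *, hij.symm, hik.symm, hjk.symm, hil.symm,
        hjl.symm, hkl.symm])
      (by simp [Injective, Fin.forall_fin_succ, hv.eq_iff]) ![0, 1, 2, 3]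

/-- Every delta pattern that leaves an index free contributes a factor `∑ a = 0` or `∑ b = 0`. -/
theorem sum_mul_deltaQuartic {a b : ι → ℝ} (ha : ∑ i, a i = 0) (hb : ∑ i, b i = 0)
    (c₀ c₁ c₂ c₃ c₄ : ℝ) :
    ∑ i, ∑ j, ∑ k, ∑ l, a i * a j * b k * b l * deltaQuartic c₀ c₁ c₂ c₃ c₄ i j k l =
      c₂ * ((∑ i, a i ^ 2) * (∑ i, b i ^ 2) + 2 * (∑ i, a i * b i) ^ 2)
        + c₄ * ∑ i, a i ^ 2 * b i ^ 2 := by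
  rw [mul_comm (∑ i, a i ^ 2)]
  simp only [deltaQuartic, mul_add, mul_ite, mul_one, mul_zero, mul_assoc, sum_add_distrib,
    sum_ite_irrel, sum_const_zero, sum_ite_eq, mem_univ, if_true, ← sum_mul,
    ← mul_sum, ha, hb]
  simp only [mul_zero, zero_mul, sum_const_zero, add_zero, zero_add, sq, mul_sum, sum_mul,
    ← sum_add_distrib]
  refine sum_congr rfl fun i _ => ?_
  congr 1
  · exact sum_congr rfl fun j _ => by ring
  · ring

theorem exists_eq_delta_of_perm_invariant {M : ι → ι → ℝ}
    (hperm : ∀ (σ : Equiv.Perm ι) i j, M (σ i) (σ j) = M i j) (hι : 2 ≤ Fintype.card ι) :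
    ∃ c₀ c₁ : ℝ, ∀ i j, M i j = c₀ + c₁ * δ i j := by
  obtain ⟨v⟩ := Function.Embedding.nonempty_of_card_le (α := Fin 2) (by simpa using hι)
  refine ⟨M (v 0) (v 1), M (v 0) (v 0) - M (v 0) (v 1), fun i j => ?_⟩
  rcases eq_or_ne i j with rfl | hij
  · simpa using (hperm (Equiv.swap i (v 0)) i i).symm
  · obtain ⟨σ, hσ⟩ := Equiv.Perm.exists_extending_pair ![i, j] v
      (by simp [Injective, Fin.forall_fin_succ, hij, hij.symm]) v.injective
    simpa [hij, ← hσ] using (hperm σ i j).symm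

theorem sum_mul_delta {a : ι → ℝ} (ha : ∑ i, a i = 0) (c₀ c₁ : ℝ) :
    ∑ i, ∑ j, a i * a j * (c₀ + c₁ * δ i j) = c₁ * ∑ i, a i ^ 2 := by
  simp only [mul_add, mul_ite, mul_one, mul_zero, sum_add_distrib, sum_ite_eq, mem_univ, if_true,
    ← sum_mul, ← mul_sum, ha, zero_mul, zero_add, sq]
  ring

end DeltaTensors

section Moments

variable {ι : Type*} [Fintype ι]

theorem inner_sq_eq_sum (x a : EuclideanSpace ℝ ι) :
    ⟪x, a⟫ ^ 2 = ∑ i, ∑ j, a i * a j * (x i * x j) := by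
  simp only [PiLp.inner_apply, RCLike.inner_apply, conj_trivial]
  rw [sq, sum_mul_sum]
  exact sum_congr rfl fun i _ => sum_congr rfl fun j _ => by ring

theorem inner_sq_mul_inner_sq_eq_sum (x a b : EuclideanSpace ℝ ι) :
    ⟪x, a⟫ ^ 2 * ⟪x, b⟫ ^ 2 =
      ∑ i, ∑ j, ∑ k, ∑ l, a i * a j * b k * b l * (x i * x j * x k * x l) := by
  simp only [PiLp.inner_apply, RCLike.inner_apply, conj_trivial]
  rw [sq, sq, sum_mul_sum, sum_mul_sum]
  simp_rw [sum_mul, mul_sum]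
  exact sum_congr rfl fun i _ => sum_congr rfl fun j _ => sum_congr rfl fun k _ =>
    sum_congr rfl fun l _ => by ring

variable {μ : Measure (EuclideanSpace ℝ ι)}

theorem integral_inner_sq (hint : ∀ i j, Integrable (fun x : EuclideanSpace ℝ ι => x i * x j) μ)
    (a : EuclideanSpace ℝ ι) :
    ∫ x, ⟪x, a⟫ ^ 2 ∂μ = ∑ i, ∑ j, a i * a j * ∫ x, x i * x j ∂μ := by
  simp_rw [inner_sq_eq_sum]
  simp (disch := fun_prop) only [integral_finsetSum, integral_const_mul]

theorem integral_inner_sq_mul_inner_sq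
    (hint : ∀ i j k l, Integrable (fun x : EuclideanSpace ℝ ι => x i * x j * x k * x l) μ)
    (a b : EuclideanSpace ℝ ι) :
    ∫ x, ⟪x, a⟫ ^ 2 * ⟪x, b⟫ ^ 2 ∂μ =
      ∑ i, ∑ j, ∑ k, ∑ l, a i * a j * b k * b l * ∫ x, x i * x j * x k * x l ∂μ := by
  simp_rw [inner_sq_mul_inner_sq_eq_sum]
  simp (disch := fun_prop) only [integral_finsetSum, integral_const_mul]

theorem piLpCongrLeft_symm_apply (σ : Equiv.Perm ι) (x : EuclideanSpace ℝ ι) (i : ι) :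
    LinearIsometryEquiv.piLpCongrLeft 2 ℝ ℝ σ.symm x i = x (σ i) := by
  simp [LinearIsometryEquiv.piLpCongrLeft_apply]

end Moments

theorem exists_covf_eq_of_measurePreserving {n : ℕ} (hn : 4 ≤ n) {μ : Measure (E n)}
    (hμ : ∀ σ : Equiv.Perm (Fin n),
      MeasurePreserving (LinearIsometryEquiv.piLpCongrLeft 2 ℝ ℝ σ) μ μ)
    (hint₂ : ∀ i j, Integrable (fun x : E n => x i * x j) μ)
    (hint₄ : ∀ i j k l, Integrable (fun x : E n => x i * x j * x k * x l) μ) :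
    ∃ α β κ : ℝ, ∀ a b : E n, ∑ i, a i = 0 → ∑ i, b i = 0 →
      covf μ a b = α * ‖a‖ ^ 2 * ‖b‖ ^ 2 + β * ⟪a, b⟫ ^ 2 + κ * ∑ i, a i ^ 2 * b i ^ 2 := by
  have hcomp (σ : Equiv.Perm (Fin n)) (f : E n → ℝ) :
      ∫ x, f (LinearIsometryEquiv.piLpCongrLeft 2 ℝ ℝ σ.symm x) ∂μ = ∫ x, f x ∂μ :=
    (hμ σ.symm).integral_comp
      (LinearIsometryEquiv.piLpCongrLeft 2 ℝ ℝ σ.symm).toHomeomorph.measurableEmbedding f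
  obtain ⟨c₀, c₁, c₂, c₃, c₄, hM₄⟩ := exists_eq_deltaQuartic_of_perm_invariant
    (M := fun i j k l => ∫ x : E n, x i * x j * x k * x l ∂μ)
    ⟨fun i j k l => by congr 1 with x; ring, fun i j k l => by congr 1 with x; ring,
      fun i j k l => by congr 1 with x; ring⟩
    (fun σ i j k l => by
      simpa only [piLpCongrLeft_symm_apply] using hcomp σ fun x => x i * x j * x k * x l)
    (by simpa using hn)
  obtain ⟨_, d₁, hM₂⟩ := exists_eq_delta_of_perm_invariant
    (M := fun i j => ∫ x : E n, x i * x j ∂μ)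
    (fun σ i j => by simpa only [piLpCongrLeft_symm_apply] using hcomp σ fun x => x i * x j)
    (by simp only [Fintype.card_fin]; omega)
  refine ⟨c₂ - d₁ ^ 2, 2 * c₂, c₄, fun a b ha hb => ?_⟩
  have hM₄' (i j k l : Fin n) :
      ∫ x : E n, x i * x j * x k * x l ∂μ = deltaQuartic c₀ c₁ c₂ c₃ c₄ i j k l := by
    rw [← hM₄]
  simp only [covf, integral_inner_sq_mul_inner_sq hint₄, integral_inner_sq hint₂, hM₄', hM₂,
    sum_mul_deltaQuartic ha hb, sum_mul_delta ha, sum_mul_delta hb]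
  rw [real_inner_comm]
  simp only [EuclideanSpace.real_norm_sq_eq, PiLp.inner_apply, RCLike.inner_apply, conj_trivial]
  ring

theorem Continuous.integrable_of_ae_mem {X F : Type*} [TopologicalSpace X] [T2Space X]
    [MeasurableSpace X] [OpensMeasurableSpace X] [NormedAddCommGroup F] {μ : Measure X}
    [IsFiniteMeasure μ] {K : Set X} (hK : IsCompact K) (hμK : ∀ᵐ x ∂μ, x ∈ K) {f : X → F}
    (hf : Continuous f) : Integrable f μ := by
  rw [← Measure.restrict_eq_self_of_ae_mem hμK]
  exact hf.continuousOn.integrableOn_compact hK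

section UniformMeasure

variable {n : ℕ}

instance (d : ℝ) (K : Set (E n)) : IsFiniteMeasure (unifH d K) where
  measure_univ_lt_top := by
    rw [unifH, Measure.smul_apply, Measure.restrict_apply_univ, smul_eq_mul]
    exact (ENNReal.inv_mul_le_one _).trans_lt ENNReal.one_lt_top

theorem ae_mem_unifH (d : ℝ) {K : Set (E n)} (hK : MeasurableSet K) : ∀ᵐ x ∂unifH d K, x ∈ K :=
  Measure.ae_smul_measure (ae_restrict_mem hK) _

theorem measurePreserving_unifH (e : E n ≃ᵢ E n) (d : ℝ) {K : Set (E n)} (hK : e ⁻¹' K = K) :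
    MeasurePreserving e (unifH d K) (unifH d K) := by
  have h := (e.measurePreserving_hausdorffMeasure d).restrict_preimage_emb
    e.toHomeomorph.measurableEmbedding K
  rw [hK] at h
  exact h.smul_measure _

theorem isCompact_lpBall {p : ℝ} (hp : 0 < p) : IsCompact (lpBall n p) := by
  have hcube : IsCompact (WithLp.toLp 2 '' Set.univ.pi fun _ : Fin n => Set.Icc (-1 : ℝ) 1) :=
    (isCompact_univ_pi fun _ => isCompact_Icc).image (PiLp.continuous_toLp 2 _)
  have hcont : Continuous fun x : E n => ∑ i, |x i| ^ p :=
    continuous_finsetSum _ fun i _ =>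
      (by fun_prop : Continuous fun x : E n => |x i|).rpow_const fun _ => Or.inr hp.le
  refine hcube.of_isClosed_subset (isClosed_le hcont continuous_const)
    fun x hx => ⟨x.ofLp, fun i _ => abs_le.mp ?_, rfl⟩
  by_contra! h
  have : 1 < ∑ j, |x j| ^ p := (Real.one_lt_rpow h hp).trans_le
    (single_le_sum (f := fun j => |x j| ^ p) (fun j _ => by positivity) (mem_univ i))
  exact this.not_ge hx

theorem continuous_projPerp (θ : E n) : Continuous (projPerp θ) := by
  unfold projPerp; fun_prop

theorem LinearIsometryEquiv.map_projPerp (e : E n ≃ₗᵢ[ℝ] E n) {θ : E n} (he : e θ = θ)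
    (x : E n) :
    e (projPerp θ x) = projPerp θ (e x) := by
  rw [projPerp, projPerp, map_sub, map_smul, he, ← e.inner_map_map, he]

theorem piLpCongrLeft_theta0 (σ : Equiv.Perm (Fin n)) :
    LinearIsometryEquiv.piLpCongrLeft 2 ℝ ℝ σ (theta0 n) = theta0 n := by
  ext i; simp [LinearIsometryEquiv.piLpCongrLeft_apply, theta0]

theorem preimage_piLpCongrLeft_lpBall (σ : Equiv.Perm (Fin n)) (p : ℝ) :
    LinearIsometryEquiv.piLpCongrLeft 2 ℝ ℝ σ ⁻¹' lpBall n p = lpBall n p := by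
  ext x
  simp [lpBall, LinearIsometryEquiv.piLpCongrLeft_apply,
    Equiv.sum_comp σ.symm fun i => |x i| ^ p]

theorem preimage_piLpCongrLeft_projPerp_lpBall (σ : Equiv.Perm (Fin n)) (p : ℝ) :
    LinearIsometryEquiv.piLpCongrLeft 2 ℝ ℝ σ ⁻¹' (projPerp (theta0 n) '' lpBall n p) =
      projPerp (theta0 n) '' lpBall n p := by
  set e := LinearIsometryEquiv.piLpCongrLeft 2 ℝ ℝ σ
  have he : e.symm (theta0 n) = theta0 n := by
    rw [LinearIsometryEquiv.piLpCongrLeft_symm, piLpCongrLeft_theta0]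
  rw [← e.symm_symm, ← e.symm.image_eq_preimage_symm,
    Set.image_comm fun x => e.symm.map_projPerp he x, e.symm.image_eq_preimage_symm, e.symm_symm,
    preimage_piLpCongrLeft_lpBall]

theorem measurePreserving_unifProj (σ : Equiv.Perm (Fin n)) (p : ℝ) :
    MeasurePreserving (LinearIsometryEquiv.piLpCongrLeft 2 ℝ ℝ σ) (unifProj n p) (unifProj n p) :=
  measurePreserving_unifH (LinearIsometryEquiv.piLpCongrLeft 2 ℝ ℝ σ).toIsometryEquiv _
    (preimage_piLpCongrLeft_projPerp_lpBall σ p)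

theorem sum_eq_zero_of_inner_theta0 {a : E n} (h : ⟪a, theta0 n⟫ = 0) : ∑ i, a i = 0 := by
  have h' : ⟪a, theta0 n⟫ = (∑ i, a i) * (√n)⁻¹ := by
    simp [PiLp.inner_apply, theta0, sum_mul, mul_comm]
  rcases Nat.eq_zero_or_pos n with rfl | hn
  · simp
  · rw [h'] at h
    exact (mul_eq_zero.mp h).resolve_right (by positivity)

structure IsOrthonormalPairPerp (θ a b : E n) : Prop where
  inner_left : ⟪a, θ⟫ = 0
  inner_right : ⟪b, θ⟫ = 0
  norm_left : ‖a‖ = 1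
  norm_right : ‖b‖ = 1
  inner_eq_zero : ⟪a, b⟫ = 0

theorem exists_covf_unifProj_eq (hn : 4 ≤ n) {p : ℝ} (hp : 0 < p) :
    ∃ Λ κ : ℝ, ∀ {a b : E n}, IsOrthonormalPairPerp (theta0 n) a b →
      covf (unifProj n p) a b = Λ + κ * ∑ i, a i ^ 2 * b i ^ 2 := by
  have hK := (isCompact_lpBall hp).image (continuous_projPerp (theta0 n))
  have hsupp := ae_mem_unifH ((n : ℝ) - 1) hK.measurableSet
  obtain ⟨α, _, κ, h⟩ := exists_covf_eq_of_measurePreserving hn (measurePreserving_unifProj · p)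
    (fun i j => (by fun_prop : Continuous fun x : E n => x i * x j).integrable_of_ae_mem hK hsupp)
    (fun i j k l => (by fun_prop : Continuous fun x : E n => x i * x j * x k * x l)
      |>.integrable_of_ae_mem hK hsupp)
  refine ⟨α, κ, fun hab => ?_⟩
  rw [h _ _ (sum_eq_zero_of_inner_theta0 hab.inner_left)
    (sum_eq_zero_of_inner_theta0 hab.inner_right), hab.norm_left, hab.norm_right,
    hab.inner_eq_zero]
  ring

end UniformMeasure

section Extremal

variable (m : ℕ)

theorem isOrthonormalPairPerp_xiBar :
    IsOrthonormalPairPerp (theta0 (m + 4))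
      ((√2)⁻¹ • (stdb (⟨0, by omega⟩ : Fin (m + 4)) - stdb ⟨1, by omega⟩))
      ((√2)⁻¹ • (stdb (⟨2, by omega⟩ : Fin (m + 4)) - stdb ⟨3, by omega⟩)) := by
  refine ⟨?_, ?_, ?_, ?_, ?_⟩ <;>
    simp only [norm_eq_sqrt_real_inner, Real.sqrt_eq_one, stdb, inner_sub_left, inner_sub_right,
      real_inner_smul_left, real_inner_smul_right, EuclideanSpace.inner_single_left,
      PiLp.single_apply] <;>
    field_simp <;> norm_num [theta0]

theorem isOrthonormalPairPerp_xi :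
    IsOrthonormalPairPerp (theta0 (m + 4))
      ((2:ℝ)⁻¹ • (stdb (⟨0, by omega⟩ : Fin (m + 4)) - stdb ⟨1, by omega⟩
        + stdb ⟨2, by omega⟩ - stdb ⟨3, by omega⟩))
      ((2:ℝ)⁻¹ • (stdb (⟨0, by omega⟩ : Fin (m + 4)) - stdb ⟨1, by omega⟩
        - stdb ⟨2, by omega⟩ + stdb ⟨3, by omega⟩)) := by
  refine ⟨?_, ?_, ?_, ?_, ?_⟩ <;>
    simp only [norm_eq_sqrt_real_inner, Real.sqrt_eq_one, stdb, inner_sub_left, inner_sub_right,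
      inner_add_left, inner_add_right, real_inner_smul_left, real_inner_smul_right,
      EuclideanSpace.inner_single_left, PiLp.single_apply] <;>
    norm_num [theta0]

theorem sum_sq_mul_sq_xiBar :
    ∑ i, ((√2)⁻¹ • (stdb (⟨0, by omega⟩ : Fin (m + 4)) - stdb ⟨1, by omega⟩) : E (m + 4)) i ^ 2 *
      ((√2)⁻¹ • (stdb (⟨2, by omega⟩ : Fin (m + 4)) - stdb ⟨3, by omega⟩) : E (m + 4)) i ^ 2
      = 0 := by
  refine sum_eq_zero fun i _ => ?_
  simp only [PiLp.smul_apply, PiLp.sub_apply, stdb, PiLp.single_apply, smul_eq_mul]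
  split_ifs <;> simp_all

theorem sum_sq_mul_sq_xi :
    ∑ i, ((2:ℝ)⁻¹ • (stdb (⟨0, by omega⟩ : Fin (m + 4)) - stdb ⟨1, by omega⟩
        + stdb ⟨2, by omega⟩ - stdb ⟨3, by omega⟩) : E (m + 4)) i ^ 2 *
      ((2:ℝ)⁻¹ • (stdb (⟨0, by omega⟩ : Fin (m + 4)) - stdb ⟨1, by omega⟩
        - stdb ⟨2, by omega⟩ + stdb ⟨3, by omega⟩) : E (m + 4)) i ^ 2 = 4⁻¹ := by
  have h (i : Fin (m + 4)) :
      ((2:ℝ)⁻¹ • (stdb (⟨0, by omega⟩ : Fin (m + 4)) - stdb ⟨1, by omega⟩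
        + stdb ⟨2, by omega⟩ - stdb ⟨3, by omega⟩) : E (m + 4)) i ^ 2 *
      ((2:ℝ)⁻¹ • (stdb (⟨0, by omega⟩ : Fin (m + 4)) - stdb ⟨1, by omega⟩
        - stdb ⟨2, by omega⟩ + stdb ⟨3, by omega⟩) : E (m + 4)) i ^ 2 =
      16⁻¹ * (δ i ⟨0, by omega⟩ + δ i ⟨1, by omega⟩ + δ i ⟨2, by omega⟩ + δ i ⟨3, by omega⟩) := by
    simp only [PiLp.smul_apply, PiLp.add_apply, PiLp.sub_apply, stdb, PiLp.single_apply,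
      smul_eq_mul]
    split_ifs <;> simp_all <;> norm_num
  simp only [h, ← mul_sum, sum_add_distrib, sum_ite_eq', mem_univ, if_true]
  norm_num

end Extremal

/-- decomposition of `f(η₁,η₂)` on `P_{θ₀⊥}B_p^n` in terms of the extremal values
and `∑ η₁(i)²η₂(i)²`. -/
theorem covf_decomposition_proj
    (n : ℕ) (hn : 4 ≤ n) (p : ℝ) (hp : 1 ≤ p)
    (η₁ η₂ : E n) (hη₁ : ‖η₁‖ = 1) (hη₂ : ‖η₂‖ = 1) (hortho : ⟪η₁, η₂⟫ = 0)
    (hθ₁ : ⟪η₁, theta0 n⟫ = 0) (hθ₂ : ⟪η₂, theta0 n⟫ = 0) :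
    covf (unifProj n p) η₁ η₂ =
      covf (unifProj n p)
          ((Real.sqrt 2)⁻¹ • (stdb (⟨0, by omega⟩ : Fin n) - stdb ⟨1, by omega⟩))
          ((Real.sqrt 2)⁻¹ • (stdb (⟨2, by omega⟩ : Fin n) - stdb ⟨3, by omega⟩)) +
      4 * (covf (unifProj n p)
            ((2:ℝ)⁻¹ • (stdb (⟨0, by omega⟩ : Fin n) - stdb ⟨1, by omega⟩
              + stdb ⟨2, by omega⟩ - stdb ⟨3, by omega⟩))
            ((2:ℝ)⁻¹ • (stdb (⟨0, by omega⟩ : Fin n) - stdb ⟨1, by omega⟩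
              - stdb ⟨2, by omega⟩ + stdb ⟨3, by omega⟩)) -
          covf (unifProj n p)
            ((Real.sqrt 2)⁻¹ • (stdb (⟨0, by omega⟩ : Fin n) - stdb ⟨1, by omega⟩))
            ((Real.sqrt 2)⁻¹ • (stdb (⟨2, by omega⟩ : Fin n) - stdb ⟨3, by omega⟩))) *
        ∑ i, η₁ i ^ 2 * η₂ i ^ 2 := by
  obtain ⟨Λ, κ, hcov⟩ := exists_covf_unifProj_eq hn (zero_lt_one.trans_le hp)
  obtain ⟨m, rfl⟩ : ∃ m, n = m + 4 := ⟨n - 4, by omega⟩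
  rw [hcov ⟨hθ₁, hθ₂, hη₁, hη₂, hortho⟩, hcov (isOrthonormalPairPerp_xiBar m),
    hcov (isOrthonormalPairPerp_xi m), sum_sq_mul_sq_xiBar, sum_sq_mul_sq_xi]
  ring
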